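/- Let A be an n×n real symmetric matrix with entries satisfying 0 < c ≤ a_{i,j} ≤ b, λ its Perron eigenvalue and x its normalized Perron eigenvector (positive entries, ‖x‖₂ = 1). Then every entry of the rank-one matrix λ·x·xᵀ is at least c³/b². -/

import Mathlib

/-!
With `S = ∑ k, x k`, the eigen-equation `λ x_k = (A x)_k` and the entry bounds give
`c S ≤ λ x_k ≤ b S` for every `k`, and `λ = xᵀ A x = ∑ k, (λ x_k) x_k ≤ b S²`. Hence
`λ x_i x_j = (λ x_i)(λ x_j) / λ ≥ (c S)² / (b S²) = c² / b ≥ c³ / b²`.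
-/

open Finset

namespace Matrix

section OrderedSemiring

variable {ι R : Type*} [Fintype ι] [CommSemiring R] [PartialOrder R] [IsOrderedRing R]
  {A : Matrix ι ι R} {x : ι → R}

theorem mul_sum_le_mulVec_apply {c : R} (hA : ∀ i j, c ≤ A i j) (hx : 0 ≤ x) (i : ι) :
    c * ∑ j, x j ≤ (A *ᵥ x) i := by
  rw [mulVec, dotProduct, mul_sum]
  exact sum_le_sum fun j _ => mul_le_mul_of_nonneg_right (hA i j) (hx j)

theorem mulVec_apply_le_mul_sum {b : R} (hA : ∀ i j, A i j ≤ b) (hx : 0 ≤ x) (i : ι) :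
    (A *ᵥ x) i ≤ b * ∑ j, x j := by
  rw [mulVec, dotProduct, mul_sum]
  exact sum_le_sum fun j _ => mul_le_mul_of_nonneg_right (hA i j) (hx j)

theorem eigenvalue_le_mul_sq_sum {b lam : R} (hA : ∀ i j, A i j ≤ b) (hx : 0 ≤ x)
    (hxnorm : ∑ i, x i ^ 2 = 1) (heig : A *ᵥ x = lam • x) :
    lam ≤ b * (∑ i, x i) ^ 2 :=
  calc lam = ∑ i, (A *ᵥ x) i * x i := by
        simp only [heig, Pi.smul_apply, smul_eq_mul, mul_assoc, ← sq, ← mul_sum, hxnorm,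
          mul_one]
    _ ≤ ∑ i, (b * ∑ j, x j) * x i :=
        sum_le_sum fun i _ => mul_le_mul_of_nonneg_right (mulVec_apply_le_mul_sum hA hx i) (hx i)
    _ = b * (∑ i, x i) ^ 2 := by rw [← mul_sum]; ring

end OrderedSemiring

theorem sq_div_le_eigenvalue_mul_mul {ι : Type*} [Fintype ι] {A : Matrix ι ι ℝ}
    {x : ι → ℝ} {c b lam : ℝ} (hc : 0 < c) (hA : ∀ i j, c ≤ A i j ∧ A i j ≤ b)
    (hx : ∀ i, 0 < x i) (hxnorm : ∑ i, x i ^ 2 = 1) (heig : A *ᵥ x = lam • x) (i j : ι) :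
    c ^ 2 / b ≤ lam * x i * x j := by
  have hx₀ : 0 ≤ x := fun k => (hx k).le
  set S := ∑ k, x k
  have hS : 0 < S := sum_pos (fun k _ => hx k) ⟨i, mem_univ i⟩
  have hlow : ∀ k, c * S ≤ lam * x k := fun k => by
    simpa [heig] using mul_sum_le_mulVec_apply (fun k m => (hA k m).1) hx₀ k
  have hup : lam ≤ b * S ^ 2 := eigenvalue_le_mul_sq_sum (fun k m => (hA k m).2) hx₀ hxnorm heig
  have hlam : 0 < lam := pos_of_mul_pos_left ((mul_pos hc hS).trans_le (hlow i)) (hx i).le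
  calc c ^ 2 / b = (c * S) * (c * S) / (b * S ^ 2) := by field_simp
    _ ≤ (lam * x i) * (lam * x j) / lam :=
        div_le_div₀ (mul_pos (mul_pos hlam (hx i)) (mul_pos hlam (hx j))).le
          (mul_le_mul (hlow i) (hlow j) (by positivity) (mul_pos hlam (hx i)).le) hlam hup
    _ = lam * x i * x j := by field_simp

end Matrix

theorem perron_rank_one_entry_bound_general (n : ℕ) (A : Matrix (Fin n) (Fin n) ℝ)
    (c b : ℝ) (hc : 0 < c)
    (hbound : ∀ i j, c ≤ A i j ∧ A i j ≤ b)
    (x : Fin n → ℝ) (lam : ℝ)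
    (hxpos : ∀ i, 0 < x i) (hxnorm : ∑ i, x i ^ 2 = 1)
    (heig : A.mulVec x = lam • x) :
    ∀ i j, c ^ 3 / b ^ 2 ≤ lam * x i * x j := by
  intro i j
  have hcb : c ≤ b := (hbound i i).1.trans (hbound i i).2
  have hb : 0 < b := hc.trans_le hcb
  calc c ^ 3 / b ^ 2 = c / b * (c ^ 2 / b) := by field_simp
    _ ≤ 1 * (c ^ 2 / b) := by gcongr; exact div_le_one_of_le₀ hcb hb.le
    _ = c ^ 2 / b := one_mul _
    _ ≤ lam * x i * x j := Matrix.sq_div_le_eigenvalue_mul_mul hc hbound hxpos hxnorm heig i j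

/-- Every entry of `λ x xᵀ` is at least `c³ / b²`, where `λ` is the Perron
eigenvalue and `x` the normalized Perron eigenvector. -/
theorem perron_rank_one_entry_bound (n : ℕ) (A : Matrix (Fin n) (Fin n) ℝ)
    (c b : ℝ) (hA : A.IsSymm) (hc : 0 < c) (hcb : c ≤ b)
    (hbound : ∀ i j, c ≤ A i j ∧ A i j ≤ b)
    (x : Fin n → ℝ) (lam : ℝ)
    (hxpos : ∀ i, 0 < x i) (hxnorm : ∑ i, x i ^ 2 = 1)
    (heig : A.mulVec x = lam • x)
    (hmem : lam ∈ spectrum ℝ A) (hmax : ∀ μ ∈ spectrum ℝ A, |μ| ≤ lam) :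
    ∀ i j, c ^ 3 / b ^ 2 ≤ lam * x i * x j :=
  perron_rank_one_entry_bound_general n A c b hc hbound x lam hxpos hxnorm heig
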